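/- arXiv:2305.05895 — 7 statements merged into one kernel-verified Lean document; each statement's English description precedes it below -/
import Mathlib

section
/- For all real numbers x, y ≥ 0 (with x ≠ y, x,y > 0), one has (x/y + y/x) * ln|(x+y)/(x-y)| - 2 ≥ 0. -/
/-!
Put `u = y / x` with `y < x` (the expression is symmetric in `x` and `y`). Then
`log |(x + y) / (x - y)| = log (1 + u) - log (1 - u) = 2 (u + u³/3 + u⁵/5 + …) ≥ 2u`,
while `(x / y + y / x) · 2u = 2 + 2u² ≥ 2`.
-/

open Real

lemma two_mul_le_log_one_add_sub_log_one_sub {u : ℝ} (hu₀ : 0 ≤ u) (hu₁ : u < 1) :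
    2 * u ≤ log (1 + u) - log (1 - u) := by
  have hs := hasSum_log_sub_log_of_abs_lt_one (abs_lt.2 ⟨by linarith, hu₁⟩)
  simpa using le_hasSum hs 0 fun k _ ↦ by positivity

lemma log_abs_add_div_sub_eq {x y : ℝ} (hy : 0 < y) (hyx : y < x) :
    log |(x + y) / (x - y)| = log (1 + y / x) - log (1 - y / x) := by
  have hx : 0 < x := hy.trans hyx
  have hu₁ : y / x < 1 := (div_lt_one hx).2 hyx
  have hquot : (x + y) / (x - y) = (1 + y / x) / (1 - y / x) := by
    field_simp
  rw [hquot, abs_of_pos (div_pos (by positivity) (by linarith)),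
    log_div (by positivity) (by linarith)]

lemma kernel_nonneg_of_lt {x y : ℝ} (hy : 0 < y) (hyx : y < x) :
    (x / y + y / x) * log |(x + y) / (x - y)| - 2 ≥ 0 := by
  have hx : 0 < x := hy.trans hyx
  have hlog : 2 * (y / x) ≤ log |(x + y) / (x - y)| := by
    rw [log_abs_add_div_sub_eq hy hyx]
    exact two_mul_le_log_one_add_sub_log_one_sub (by positivity) ((div_lt_one hx).2 hyx)
  have hprod : (x / y + y / x) * (2 * (y / x)) = 2 + 2 * (y / x) ^ 2 := by
    field_simp
  have hmul := mul_le_mul_of_nonneg_left hlog (by positivity : 0 ≤ x / y + y / x)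
  linarith [sq_nonneg (y / x)]

theorem kernel_nonneg (x y : ℝ) (hx : 0 < x) (hy : 0 < y) (hxy : x ≠ y) :
    (x / y + y / x) * Real.log (|(x + y) / (x - y)|) - 2 ≥ 0 := by
  wlog hyx : y < x generalizing x y
  · have hswap : |(x + y) / (x - y)| = |(y + x) / (y - x)| := by
      rw [abs_div, abs_div, abs_sub_comm, add_comm]
    rw [hswap, add_comm (x / y)]
    exact this y x hy hx hxy.symm (hxy.lt_or_gt.resolve_right hyx)
  exact kernel_nonneg_of_lt hy hyx
end

section
/- Let F'(t) = ((t^2+1)/(2t^2)) * ln|(t+1)/(t-1)| - 1/t for t > 0, t ≠ 1. Then F'(t) > 0 for all t > 0 with t ≠ 1. -/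
/-!
For `0 < t < 1` the logarithm in `Fderiv t` is `log (1 + t) - log (1 - t) = 2 ∑ t^(2k+1)/(2k+1)`,
a series of positive terms, so it exceeds its first term `2t` and `Fderiv t > t`.
The case `t > 1` reduces to this one through the symmetry `Fderiv t⁻¹ = t² Fderiv t`.
-/

noncomputable def Fderiv (t : ℝ) : ℝ :=
  ((t ^ 2 + 1) / (2 * t ^ 2)) * Real.log (|(t + 1) / (t - 1)|) - 1 / t

open Real

lemma two_mul_lt_log_one_add_sub_log_one_sub {x : ℝ} (hx₀ : 0 < x) (hx₁ : x < 1) :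
    2 * x < log (1 + x) - log (1 - x) := by
  have hsum := hasSum_log_sub_log_of_abs_lt_one (abs_lt.2 ⟨by linarith, hx₁⟩)
  have hlt := lt_hasSum hsum 0 (fun k _ ↦ by positivity) 1 one_ne_zero (by positivity)
  simpa using hlt

lemma Fderiv_inv (t : ℝ) (ht : t ≠ 0) : Fderiv t⁻¹ = t ^ 2 * Fderiv t := by
  have hquot : (t⁻¹ + 1) / (t⁻¹ - 1) = -((t + 1) / (t - 1)) := by
    rcases eq_or_ne t 1 with rfl | ht1
    · norm_num
    · field_simp [sub_ne_zero.2 ht1, sub_ne_zero.2 ht1.symm]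
      ring
  rw [Fderiv, Fderiv, hquot, abs_neg]
  field_simp
  ring

lemma Fderiv_pos_of_lt_one {t : ℝ} (ht₀ : 0 < t) (ht₁ : t < 1) : 0 < Fderiv t := by
  have hlog : log |(t + 1) / (t - 1)| = log (1 + t) - log (1 - t) := by
    rw [abs_div, abs_of_pos (by linarith), abs_of_neg (by linarith),
      log_div (by linarith) (by linarith), neg_sub, add_comm]
  have hcoef : 0 < (t ^ 2 + 1) / (2 * t ^ 2) := by positivity
  have hfirst : (t ^ 2 + 1) / (2 * t ^ 2) * (2 * t) - 1 / t = t := by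
    field_simp
    ring
  calc 0 < t := ht₀
    _ = (t ^ 2 + 1) / (2 * t ^ 2) * (2 * t) - 1 / t := hfirst.symm
    _ < Fderiv t := by
      rw [Fderiv, hlog]
      gcongr
      exact two_mul_lt_log_one_add_sub_log_one_sub ht₀ ht₁

theorem Fderiv_pos (t : ℝ) (ht : 0 < t) (ht1 : t ≠ 1) : 0 < Fderiv t := by
  rcases ht1.lt_or_gt with hlt | hgt
  · exact Fderiv_pos_of_lt_one ht hlt
  · have hinv := Fderiv_pos_of_lt_one (inv_pos.2 ht) (inv_lt_one_of_one_lt₀ hgt)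
    rw [Fderiv_inv _ ht.ne'] at hinv
    exact pos_of_mul_pos_right hinv (by positivity)
end

section
/- Let f : ℝ → ℝ be even and continuous with f(0) = 1, (1-x²)₊ ≤ f(x) ≤ 1 for all x, f non-increasing on [0,∞), and s ↦ f(√s) convex. Then for any x > 0, c(f) := (2/π) ∫₀^∞ (1 - f(y))/y² dy satisfies c(f) ≤ min{ (4(x+1)/(πx)) (1 - f(x))^{1/2}, 4/π }. -/
open MeasureTheory Set

/-!
Write `ε = 1 - f x` and `a = √ε`. Since `1 - f y ≤ y²`, the integrand is at most `1` on `(0, a]`;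
by monotonicity of `f` it is at most `ε / y²` on `(a, x]`; convexity of `s ↦ f √s` through the point
`(0, 1)` makes `(1 - f y) / y²` antitone, so it is at most `ε / x²` on `(x, x / a]`; and since
`f ≥ 0` it is at most `1 / y²` beyond `x / a`. The four pieces contribute at most
`a + a + a / x + a / x`. The bound `4 / π` is the same argument with the pieces `(0, 1]` and `(1, ∞)`.
-/

lemma setIntegral_Ioc_add_Ioi {g : ℝ → ℝ} {c d : ℝ} (hg : IntegrableOn g (Ioi c)) (hcd : c ≤ d) :
    (∫ y in Ioc c d, g y) + ∫ y in Ioi d, g y = ∫ y in Ioi c, g y := by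
  rw [← intervalIntegral.integral_of_le hcd]
  exact intervalIntegral.integral_interval_add_Ioi hg (hg.mono_set (Ioi_subset_Ioi hcd))

lemma rpow_neg_two_eq_inv_sq {y : ℝ} (hy : 0 ≤ y) : y ^ (-2 : ℝ) = (y ^ 2)⁻¹ := by
  rw [Real.rpow_neg hy]
  norm_cast

lemma integrableOn_Ioi_inv_sq {c : ℝ} (hc : 0 < c) :
    IntegrableOn (fun y : ℝ => (y ^ 2)⁻¹) (Ioi c) :=
  (integrableOn_Ioi_rpow_of_lt (by norm_num) hc).congr_fun
    (fun _ hy => rpow_neg_two_eq_inv_sq (hc.trans hy).le) measurableSet_Ioi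

lemma integral_Ioi_inv_sq {c : ℝ} (hc : 0 < c) : ∫ y in Ioi c, (y ^ 2)⁻¹ = c⁻¹ := by
  rw [← setIntegral_congr_fun measurableSet_Ioi
    (fun _ hy => rpow_neg_two_eq_inv_sq (hc.trans hy).le), integral_Ioi_rpow_of_lt (by norm_num) hc]
  norm_num [Real.rpow_neg_one]

lemma setIntegral_le_div_of_le_div_sq {g : ℝ → ℝ} {s : Set ℝ} {c C : ℝ} (hsc : s ⊆ Ioi c)
    (hc : 0 < c) (hC : 0 ≤ C) (hg0 : ∀ y ∈ s, 0 ≤ g y) (hg : ∀ y ∈ s, g y ≤ C / y ^ 2) :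
    ∫ y in s, g y ≤ C / c := by
  have hint : IntegrableOn (fun y : ℝ => C / y ^ 2) (Ioi c) := by
    simp only [div_eq_mul_inv]
    exact (integrableOn_Ioi_inv_sq hc).const_mul C
  calc ∫ y in s, g y ≤ ∫ y in s, C / y ^ 2 := setIntegral_mono_of_nonneg hg0 hg (hint.mono_set hsc)
    _ ≤ ∫ y in Ioi c, C / y ^ 2 :=
        setIntegral_mono_set hint (.of_forall fun y => by positivity) hsc.eventuallyLE
    _ = C / c := by
        simp only [div_eq_mul_inv]
        rw [integral_const_mul, integral_Ioi_inv_sq hc]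

lemma setIntegral_Ioc_le_mul_sub {g : ℝ → ℝ} {c d C : ℝ} (hcd : c ≤ d)
    (hg0 : ∀ y ∈ Ioc c d, 0 ≤ g y) (hg : ∀ y ∈ Ioc c d, g y ≤ C) :
    ∫ y in Ioc c d, g y ≤ C * (d - c) := by
  calc ∫ y in Ioc c d, g y ≤ ∫ _ in Ioc c d, C :=
        setIntegral_mono_of_nonneg hg0 hg (integrableOn_const measure_Ioc_lt_top.ne)
    _ = C * (d - c) := by simp [hcd, mul_comm]

lemma antitoneOn_one_sub_div_sq {f : ℝ → ℝ} (h0 : f 0 = 1)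
    (hconv : ConvexOn ℝ (Ici 0) (fun s => f √s)) :
    AntitoneOn (fun y => (1 - f y) / y ^ 2) (Ioi 0) := by
  intro x hx y _ hxy
  have hslope := hconv.secant_mono (a := 0) self_mem_Ici (sq_nonneg x) (sq_nonneg y)
    (pow_pos hx 2).ne' (pow_pos (hx.trans_le hxy) 2).ne' (pow_le_pow_left₀ hx.le hxy 2)
  simp only [Real.sqrt_sq hx.le, Real.sqrt_sq (hx.trans_le hxy).le,
    Real.sqrt_zero, h0, sub_zero] at hslope
  have hneg : ∀ z : ℝ, (1 - f z) / z ^ 2 = -((f z - 1) / z ^ 2) := fun z => by ring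
  simp only [hneg]
  exact neg_le_neg hslope

section Integrand

variable {u : ℝ → ℝ}

lemma integrableOn_Ioi_zero_div_sq (hu : Measurable u) (hu0 : ∀ y > 0, 0 ≤ u y)
    (hu_sq : ∀ y > 0, u y ≤ y ^ 2) (hu1 : ∀ y > 0, u y ≤ 1) :
    IntegrableOn (fun y => u y / y ^ 2) (Ioi 0) := by
  have hmeas : AEStronglyMeasurable (fun y => u y / y ^ 2) :=
    (hu.div (measurable_id.pow_const 2)).aestronglyMeasurable
  rw [← Ioc_union_Ioi_eq_Ioi zero_le_one]
  refine IntegrableOn.union ?_ ?_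
  · refine Measure.integrableOn_of_bounded (M := 1) measure_Ioc_lt_top.ne hmeas ?_
    filter_upwards [ae_restrict_mem measurableSet_Ioc] with y hy
    rw [Real.norm_of_nonneg (div_nonneg (hu0 y hy.1) (sq_nonneg y)), div_le_one (pow_pos hy.1 2)]
    exact hu_sq y hy.1
  · refine (integrableOn_Ioi_inv_sq one_pos).mono' hmeas.restrict ?_
    filter_upwards [ae_restrict_mem measurableSet_Ioi] with y hy
    have hy0 : (0 : ℝ) < y := one_pos.trans hy
    rw [Real.norm_of_nonneg (div_nonneg (hu0 y hy0) (sq_nonneg y)), ← one_div]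
    gcongr
    exact hu1 y hy0

lemma setIntegral_Ioi_zero_div_sq_le_two (hu : Measurable u) (hu0 : ∀ y > 0, 0 ≤ u y)
    (hu_sq : ∀ y > 0, u y ≤ y ^ 2) (hu1 : ∀ y > 0, u y ≤ 1) :
    ∫ y in Ioi 0, u y / y ^ 2 ≤ 2 := by
  have hg0 : ∀ y > 0, 0 ≤ u y / y ^ 2 := fun y hy => div_nonneg (hu0 y hy) (sq_nonneg y)
  rw [← setIntegral_Ioc_add_Ioi (integrableOn_Ioi_zero_div_sq hu hu0 hu_sq hu1) zero_le_one]
  have head := setIntegral_Ioc_le_mul_sub zero_le_one (fun y hy => hg0 y hy.1)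
    (fun y hy => (div_le_one (pow_pos hy.1 2)).2 (hu_sq y hy.1))
  have tail := setIntegral_le_div_of_le_div_sq subset_rfl one_pos zero_le_one
    (fun y hy => hg0 y (one_pos.trans hy))
    (fun y hy => div_le_div_of_nonneg_right (hu1 y (one_pos.trans hy)) (sq_nonneg y))
  linarith

lemma setIntegral_Ioi_zero_div_sq_le_sqrt (hu : Measurable u) (hu0 : ∀ y > 0, 0 ≤ u y)
    (hu_sq : ∀ y > 0, u y ≤ y ^ 2) (hu1 : ∀ y > 0, u y ≤ 1) {x : ℝ} (hx : 0 < x)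
    (hbefore : ∀ y ∈ Ioc 0 x, u y ≤ u x) (hafter : ∀ y ∈ Ioi x, u y / y ^ 2 ≤ u x / x ^ 2) :
    ∫ y in Ioi 0, u y / y ^ 2 ≤ 2 * (x + 1) / x * √(u x) := by
  have hg0 : ∀ y > 0, 0 ≤ u y / y ^ 2 := fun y hy => div_nonneg (hu0 y hy) (sq_nonneg y)
  rcases (hu0 x hx).eq_or_lt with hzero | hpos
  · rw [← hzero, Real.sqrt_zero, mul_zero]
    refine setIntegral_nonpos measurableSet_Ioi fun y (hy : 0 < y) => ?_
    rcases le_or_gt y x with hyx | hxy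
    · exact div_nonpos_of_nonpos_of_nonneg (hzero ▸ hbefore y ⟨hy, hyx⟩) (sq_nonneg y)
    · simpa [← hzero] using hafter y hxy
  set a := √(u x)
  have ha : 0 < a := Real.sqrt_pos.2 hpos
  have ha2 : a ^ 2 = u x := Real.sq_sqrt hpos.le
  have hax : a ≤ x := (Real.sqrt_le_sqrt (hu_sq x hx)).trans_eq (Real.sqrt_sq hx.le)
  have hxb : x ≤ x / a := by
    rw [le_div_iff₀ ha]
    nlinarith [Real.sqrt_le_one.2 (hu1 x hx)]
  have hb : 0 < x / a := hx.trans_le hxb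
  have hint := integrableOn_Ioi_zero_div_sq hu hu0 hu_sq hu1
  rw [← setIntegral_Ioc_add_Ioi hint ha.le,
    ← setIntegral_Ioc_add_Ioi (hint.mono_set (Ioi_subset_Ioi ha.le)) hax,
    ← setIntegral_Ioc_add_Ioi (hint.mono_set (Ioi_subset_Ioi hx.le)) hxb]
  have head := setIntegral_Ioc_le_mul_sub ha.le (fun y hy => hg0 y hy.1)
    (fun y hy => (div_le_one (pow_pos hy.1 2)).2 (hu_sq y hy.1))
  have middle := setIntegral_le_div_of_le_div_sq Ioc_subset_Ioi_self ha hpos.le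
    (fun y hy => hg0 y (ha.trans hy.1))
    (fun y hy => div_le_div_of_nonneg_right (hbefore y ⟨ha.trans hy.1, hy.2⟩) (sq_nonneg y))
  have near := setIntegral_Ioc_le_mul_sub hxb (fun y hy => hg0 y (hx.trans hy.1))
    (fun y hy => hafter y hy.1)
  have tail := setIntegral_le_div_of_le_div_sq subset_rfl hb zero_le_one
    (fun y hy => hg0 y (hb.trans hy))
    (fun y hy => div_le_div_of_nonneg_right (hu1 y (hb.trans hy)) (sq_nonneg y))
  have hsum : 1 * (a - 0) + (u x / a + (u x / x ^ 2 * (x / a - x) + 1 / (x / a)))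
      = 2 * (x + 1) / x * a - u x / x := by
    rw [← ha2]
    field_simp
    ring
  have hux : 0 ≤ u x / x := div_nonneg hpos.le hx.le
  linarith

end Integrand

theorem cf_upper_bound_general (f : ℝ → ℝ) (hcont : Continuous f)
    (h0 : f 0 = 1)
    (hbound : ∀ x, max (1 - x ^ 2) 0 ≤ f x ∧ f x ≤ 1)
    (hmono : AntitoneOn f (Set.Ici 0))
    (hconv : ConvexOn ℝ (Set.Ici 0) (fun s => f (Real.sqrt s)))
    (x : ℝ) (hx : 0 < x) :
    (2 / Real.pi) * ∫ y in Set.Ioi (0 : ℝ), (1 - f y) / y ^ 2 ≤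
      min ((4 * (x + 1) / (Real.pi * x)) * Real.sqrt (1 - f x)) (4 / Real.pi) := by
  have hu : Measurable fun y => 1 - f y := (continuous_const.sub hcont).measurable
  have hu0 : ∀ y > 0, 0 ≤ 1 - f y := fun y _ => sub_nonneg.2 (hbound y).2
  have hu_sq : ∀ y > 0, 1 - f y ≤ y ^ 2 := fun y _ => by
    linarith [le_max_left (1 - y ^ 2) 0, (hbound y).1]
  have hu1 : ∀ y > 0, 1 - f y ≤ 1 := fun y _ => by
    linarith [le_max_right (1 - y ^ 2) 0, (hbound y).1]
  have hbefore : ∀ y ∈ Ioc 0 x, 1 - f y ≤ 1 - f x := fun y hy =>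
    sub_le_sub_left (hmono hy.1.le hx.le hy.2) 1
  have hafter : ∀ y ∈ Ioi x, (1 - f y) / y ^ 2 ≤ (1 - f x) / x ^ 2 := fun y hy =>
    antitoneOn_one_sub_div_sq h0 hconv hx (hx.trans hy) hy.le
  have hπ := Real.pi_pos
  refine le_min ?_ ?_
  · calc (2 / Real.pi) * ∫ y in Ioi 0, (1 - f y) / y ^ 2
        ≤ (2 / Real.pi) * (2 * (x + 1) / x * √(1 - f x)) := by
          gcongr
          exact setIntegral_Ioi_zero_div_sq_le_sqrt hu hu0 hu_sq hu1 hx hbefore hafter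
      _ = 4 * (x + 1) / (Real.pi * x) * √(1 - f x) := by
          field_simp
          ring
  · calc (2 / Real.pi) * ∫ y in Ioi 0, (1 - f y) / y ^ 2 ≤ (2 / Real.pi) * 2 := by
          gcongr
          exact setIntegral_Ioi_zero_div_sq_le_two hu hu0 hu_sq hu1
      _ = 4 / Real.pi := by ring

theorem cf_upper_bound (f : ℝ → ℝ) (hcont : Continuous f)
    (heven : ∀ x, f (-x) = f x) (h0 : f 0 = 1)
    (hbound : ∀ x, max (1 - x ^ 2) 0 ≤ f x ∧ f x ≤ 1)
    (hmono : AntitoneOn f (Set.Ici 0))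
    (hconv : ConvexOn ℝ (Set.Ici 0) (fun s => f (Real.sqrt s)))
    (x : ℝ) (hx : 0 < x) :
    (2 / Real.pi) * ∫ y in Set.Ioi (0 : ℝ), (1 - f y) / y ^ 2 ≤
      min ((4 * (x + 1) / (Real.pi * x)) * Real.sqrt (1 - f x)) (4 / Real.pi) :=
  cf_upper_bound_general f hcont h0 hbound hmono hconv x hx
end

section
/- Let f₁, f₂ : ℝ → ℝ be even continuous functions with (1-x²)₊ ≤ f_i(x) ≤ 1 for all x. Then |c(f₁) - c(f₂)| ≤ C ‖ρ(f₁-f₂)‖_{L^∞}^{1/2} for some absolute constant C, where c(f) = (2/π)∫₀^∞ (1-f(y))/y² dy and ρ(x) = (1+|x|)^{-1/2}. -/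
/-!
Put `d = f₂ - f₁`. The band `(1 - x²)₊ ≤ fᵢ ≤ 1` gives `|d y| ≤ min (y², 1)`, and the weighted
bound gives `|d y| ≤ δ √(1 + y) ≤ δ (1 + √y)`. Splitting `∫₀^∞ d y / y²` at `s`, the part over
`(0, s]` is at most `s` and the tail at most `δ / s + 2 δ / √s`; the choice `s = √δ` makes this
`O(√δ)` for `δ ≤ 1`, while for `δ > 1` the bound `|d y| ≤ min (y², 1)` alone bounds the integral
by `2`.
-/

open MeasureTheory Set

section
variable {g : ℝ → ℝ}

lemma integrableOn_Ioi_div_sq (hg : Measurable g) (hsq : ∀ y, 0 < y → |g y| ≤ y ^ 2)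
    (hone : ∀ y, 0 < y → |g y| ≤ 1) :
    IntegrableOn (fun y => g y / y ^ 2) (Ioi 0) := by
  have hmeas : AEStronglyMeasurable (fun y => g y / y ^ 2) :=
    (hg.div (measurable_id.pow_const 2)).aestronglyMeasurable
  rw [← Ioc_union_Ioi_eq_Ioi zero_le_one]
  refine IntegrableOn.union ?_ ?_
  · refine Measure.integrableOn_of_bounded (M := 1) measure_Ioc_lt_top.ne hmeas ?_
    filter_upwards [ae_restrict_mem measurableSet_Ioc] with y ⟨hy, _⟩
    rw [norm_div, Real.norm_eq_abs, norm_pow, Real.norm_eq_abs, sq_abs]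
    exact div_le_one_of_le₀ (hsq y hy) (sq_nonneg y)
  · refine (integrableOn_Ioi_rpow_of_lt (show (-2 : ℝ) < -1 by norm_num) one_pos).mono'
      hmeas.restrict ?_
    filter_upwards [ae_restrict_mem measurableSet_Ioi] with y (hy : 1 < y)
    have hy0 : 0 < y := one_pos.trans hy
    rw [norm_div, Real.norm_eq_abs, norm_pow, Real.norm_eq_abs, sq_abs, Real.rpow_neg hy0.le,
      Real.rpow_two, ← one_div]
    exact div_le_div_of_nonneg_right (hone y hy0) (sq_nonneg y)

lemma abs_setIntegral_Ioc_div_sq_le {s : ℝ} (hs : 0 ≤ s) (hsq : ∀ y, 0 < y → |g y| ≤ y ^ 2) :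
    |∫ y in Ioc 0 s, g y / y ^ 2| ≤ s := by
  have := norm_setIntegral_le_of_norm_le_const (f := fun y => g y / y ^ 2) (C := 1)
    (measure_Ioc_lt_top (μ := volume) (a := (0 : ℝ)) (b := s)) fun y ⟨hy, _⟩ => by
      rw [norm_div, Real.norm_eq_abs, norm_pow, Real.norm_eq_abs, sq_abs]
      exact div_le_one_of_le₀ (hsq y hy) (sq_nonneg y)
  simpa [Real.volume_Ioc, hs] using this

lemma abs_setIntegral_Ioi_div_sq_le {s M N : ℝ} (hs : 0 < s)
    (hbd : ∀ y, s < y → |g y| ≤ M + N * √y) :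
    |∫ y in Ioi s, g y / y ^ 2| ≤ M / s + 2 * N / √s := by
  have hmaj : IntegrableOn (fun y : ℝ => M * y ^ (-2 : ℝ) + N * y ^ (-(3 / 2) : ℝ)) (Ioi s) :=
    ((integrableOn_Ioi_rpow_of_lt (by norm_num) hs).const_mul M).add
      ((integrableOn_Ioi_rpow_of_lt (by norm_num) hs).const_mul N)
  have hle : ∀ᵐ y ∂(volume.restrict (Ioi s)),
      ‖g y / y ^ 2‖ ≤ M * y ^ (-2 : ℝ) + N * y ^ (-(3 / 2) : ℝ) := by
    filter_upwards [ae_restrict_mem measurableSet_Ioi] with y (hy : s < y)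
    have hy0 : 0 < y := hs.trans hy
    have h32 : y ^ (-(3 / 2) : ℝ) = √y * y ^ (-2 : ℝ) := by
      rw [Real.sqrt_eq_rpow, ← Real.rpow_add hy0]; norm_num
    rw [h32, Real.rpow_neg hy0.le, Real.rpow_two, norm_div, Real.norm_eq_abs, norm_pow,
      Real.norm_eq_abs, sq_abs, div_eq_mul_inv]
    calc |g y| * (y ^ 2)⁻¹ ≤ (M + N * √y) * (y ^ 2)⁻¹ := by gcongr; exact hbd y hy
      _ = _ := by ring
  refine (norm_integral_le_of_norm_le hmaj hle).trans_eq ?_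
  rw [integral_add ((integrableOn_Ioi_rpow_of_lt (by norm_num) hs).const_mul M)
      ((integrableOn_Ioi_rpow_of_lt (by norm_num) hs).const_mul N),
    integral_const_mul, integral_const_mul, integral_Ioi_rpow_of_lt (by norm_num) hs,
    integral_Ioi_rpow_of_lt (by norm_num) hs, Real.sqrt_eq_rpow]
  norm_num
  rw [Real.rpow_neg_one, Real.rpow_neg hs.le]
  ring

lemma abs_integral_Ioi_div_sq_le {s M N : ℝ} (hs : 0 < s)
    (hint : IntegrableOn (fun y => g y / y ^ 2) (Ioi 0))
    (hsq : ∀ y, 0 < y → |g y| ≤ y ^ 2) (hbd : ∀ y, 0 < y → |g y| ≤ M + N * √y) :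
    |∫ y in Ioi 0, g y / y ^ 2| ≤ s + (M / s + 2 * N / √s) := by
  rw [← Ioc_union_Ioi_eq_Ioi hs.le, setIntegral_union (Ioc_disjoint_Ioi le_rfl) measurableSet_Ioi
    (hint.mono_set Ioc_subset_Ioi_self) (hint.mono_set (Ioi_subset_Ioi hs.le))]
  exact (abs_add_le _ _).trans (add_le_add (abs_setIntegral_Ioc_div_sq_le hs.le hsq)
    (abs_setIntegral_Ioi_div_sq_le hs fun y hy => hbd y (hs.trans hy)))

lemma abs_integral_Ioi_div_sq_le_two (hint : IntegrableOn (fun y => g y / y ^ 2) (Ioi 0))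
    (hsq : ∀ y, 0 < y → |g y| ≤ y ^ 2) (hone : ∀ y, 0 < y → |g y| ≤ 1) :
    |∫ y in Ioi 0, g y / y ^ 2| ≤ 2 := by
  have := abs_integral_Ioi_div_sq_le (M := 1) (N := 0) one_pos hint hsq (by simpa using hone)
  norm_num at this
  linarith

lemma abs_integral_Ioi_div_sq_le_four_mul_sqrt {δ : ℝ} (hδ0 : 0 ≤ δ) (hδ : δ ≤ 1)
    (hint : IntegrableOn (fun y => g y / y ^ 2) (Ioi 0))
    (hsq : ∀ y, 0 < y → |g y| ≤ y ^ 2) (hbd : ∀ y, 0 < y → |g y| ≤ δ * (1 + √y)) :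
    |∫ y in Ioi 0, g y / y ^ 2| ≤ 4 * √δ := by
  have hbd' : ∀ y, 0 < y → |g y| ≤ δ + δ * √y := fun y hy => (hbd y hy).trans_eq (mul_one_add _ _)
  rcases hδ0.eq_or_lt with hδ0 | hδ0
  · subst hδ0
    refine le_of_forall_pos_le_add fun ε hε => ?_
    simpa using abs_integral_Ioi_div_sq_le hε hint hsq hbd'
  -- Take `s = √δ = u ^ 2`, so that `δ = u ^ 4` and every square root becomes a power of `u`.
  set u := √(√δ) with hu
  have hu0 : 0 < u := by positivity
  have hu1 : u ≤ 1 := by simp [hu, hδ]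
  have hδu : δ = u ^ 4 := by
    rw [hu, show 4 = 2 * 2 by rfl, pow_mul, Real.sq_sqrt (by positivity), Real.sq_sqrt hδ0.le]
  have := abs_integral_Ioi_div_sq_le (pow_pos hu0 2) hint hsq hbd'
  rw [Real.sqrt_sq hu0.le, hδu] at this
  rw [hδu, show u ^ 4 = (u ^ 2) ^ 2 by ring, Real.sqrt_sq (by positivity)]
  refine this.trans ?_
  field_simp
  nlinarith [pow_pos hu0 3]

end

section
variable {x a b : ℝ}

lemma abs_sub_le_sq_of_mem_band (ha : max (1 - x ^ 2) 0 ≤ a ∧ a ≤ 1)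
    (hb : max (1 - x ^ 2) 0 ≤ b ∧ b ≤ 1) : |a - b| ≤ x ^ 2 := by
  have := le_max_left (1 - x ^ 2) 0
  rw [abs_sub_le_iff]; constructor <;> linarith

lemma abs_sub_le_one_of_mem_band (ha : max (1 - x ^ 2) 0 ≤ a ∧ a ≤ 1)
    (hb : max (1 - x ^ 2) 0 ≤ b ∧ b ≤ 1) : |a - b| ≤ 1 := by
  have := le_max_right (1 - x ^ 2) 0
  rw [abs_sub_le_iff]; constructor <;> linarith

lemma one_mem_band : max (1 - x ^ 2) 0 ≤ 1 ∧ (1 : ℝ) ≤ 1 :=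
  ⟨max_le (by nlinarith [sq_nonneg x]) zero_le_one, le_rfl⟩

end

lemma integrableOn_Ioi_one_sub_div_sq {f : ℝ → ℝ} (hf : Measurable f)
    (hb : ∀ x, max (1 - x ^ 2) 0 ≤ f x ∧ f x ≤ 1) :
    IntegrableOn (fun y => (1 - f y) / y ^ 2) (Ioi 0) :=
  integrableOn_Ioi_div_sq (measurable_const.sub hf)
    (fun y _ => abs_sub_le_sq_of_mem_band one_mem_band (hb y))
    fun y _ => abs_sub_le_one_of_mem_band one_mem_band (hb y)

lemma sqrt_one_add_le_one_add_sqrt {t : ℝ} (ht : 0 ≤ t) : √(1 + t) ≤ 1 + √t :=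
  Real.sqrt_le_iff.2 ⟨by positivity, by nlinarith [Real.sq_sqrt ht, Real.sqrt_nonneg t]⟩

lemma abs_le_mul_one_add_sqrt {x v δ : ℝ} (h : (1 + |x|) ^ (-(1 / 2) : ℝ) * |v| ≤ δ) :
    |v| ≤ δ * (1 + √|x|) := by
  have hδ : 0 ≤ δ := (mul_nonneg (by positivity) (abs_nonneg v)).trans h
  rw [Real.rpow_neg (by positivity : (0 : ℝ) ≤ 1 + |x|), ← Real.sqrt_eq_rpow,
    inv_mul_le_iff₀ (by positivity)] at h
  calc |v| ≤ δ * √(1 + |x|) := by linarith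
    _ ≤ δ * (1 + √|x|) := by gcongr; exact sqrt_one_add_le_one_add_sqrt (abs_nonneg x)

theorem cf_holder_continuous :
    ∃ C : ℝ, 0 < C ∧ ∀ f₁ f₂ : ℝ → ℝ, Continuous f₁ → Continuous f₂ →
      (∀ x, f₁ (-x) = f₁ x) → (∀ x, f₂ (-x) = f₂ x) →
      (∀ x, max (1 - x ^ 2) 0 ≤ f₁ x ∧ f₁ x ≤ 1) →
      (∀ x, max (1 - x ^ 2) 0 ≤ f₂ x ∧ f₂ x ≤ 1) →
      ∀ δ : ℝ, 0 ≤ δ →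
        (∀ x : ℝ, (1 + |x|) ^ (-(1 / 2) : ℝ) * |f₁ x - f₂ x| ≤ δ) →
        |(2 / Real.pi) * (∫ y in Set.Ioi (0 : ℝ), (1 - f₁ y) / y ^ 2) -
          (2 / Real.pi) * (∫ y in Set.Ioi (0 : ℝ), (1 - f₂ y) / y ^ 2)| ≤
            C * Real.sqrt δ := by
  refine ⟨8 / Real.pi, by positivity, fun f₁ f₂ hf₁ hf₂ _ _ hb₁ hb₂ δ hδ hρ => ?_⟩
  have hsq y (_ : 0 < y) := abs_sub_le_sq_of_mem_band (hb₂ y) (hb₁ y)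
  have hone y (_ : 0 < y) := abs_sub_le_one_of_mem_band (hb₂ y) (hb₁ y)
  have hint : IntegrableOn (fun y => (f₂ y - f₁ y) / y ^ 2) (Ioi 0) :=
    integrableOn_Ioi_div_sq (hf₂.measurable.sub hf₁.measurable) hsq hone
  have hdiff : (fun y => (1 - f₁ y) / y ^ 2 - (1 - f₂ y) / y ^ 2) =
      fun y => (f₂ y - f₁ y) / y ^ 2 := by
    funext y; ring
  have hI : |∫ y in Ioi 0, (f₂ y - f₁ y) / y ^ 2| ≤ 4 * √δ := by
    rcases le_or_gt δ 1 with hδ1 | hδ1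
    · refine abs_integral_Ioi_div_sq_le_four_mul_sqrt hδ hδ1 hint hsq fun y hy => ?_
      simpa [abs_sub_comm, abs_of_pos hy] using abs_le_mul_one_add_sqrt (hρ y)
    · have : 1 ≤ √δ := Real.one_le_sqrt.2 hδ1.le
      linarith [abs_integral_Ioi_div_sq_le_two hint hsq hone]
  rw [← mul_sub, abs_mul, abs_of_pos (by positivity),
    ← integral_sub (integrableOn_Ioi_one_sub_div_sq hf₁.measurable hb₁)
      (integrableOn_Ioi_one_sub_div_sq hf₂.measurable hb₂), hdiff]
  calc 2 / Real.pi * |∫ y in Ioi 0, (f₂ y - f₁ y) / y ^ 2| ≤ 2 / Real.pi * (4 * √δ) := by gcongr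
    _ = 8 / Real.pi * √δ := by ring
end

section
/- Let f : ℝ → ℝ be even, with f non-increasing on [0,∞), f(0) = 1, (1-x²)₊ ≤ f ≤ 1, s ↦ f(√s) convex, and f'₋(1/2) ≤ -η for some η ∈ (0,1). Then f(x) ≤ max{1 - η x², 1 - η/4} for all x ∈ ℝ. -/
/-!
Put `g s = f (√s)`, convex on `[0, ∞)` with `g 0 = 1`. Convexity keeps `g` on `[0, 1/4]` below the
line through `(0, 1)` whose slope is the left derivative of `g` at `1/4`, namely `f'₋(1/2) ≤ -η`; so
`f x = g (x²) ≤ 1 - η x²` for `|x| ≤ 1/2`. Beyond `1/2`, monotonicity gives `f x ≤ f (1/2) ≤ 1 - η/4`.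
-/

open Set

lemma HasDerivWithinAt.comp_sqrt_Iio {f : ℝ → ℝ} {d r : ℝ} (hr : 0 < r)
    (hf : HasDerivWithinAt f d (Iio r) r) :
    HasDerivWithinAt (fun s => f √s) (d / (2 * r)) (Iio (r ^ 2)) (r ^ 2) := by
  have hsqrt : HasDerivAt Real.sqrt (1 / (2 * r)) (r ^ 2) := by
    simpa [Real.sqrt_sq hr.le] using Real.hasDerivAt_sqrt (pow_pos hr 2).ne'
  have hmaps : MapsTo Real.sqrt (Iio (r ^ 2)) (Iio r) := fun s hs =>
    (Real.sqrt_lt' hr).mpr hs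
  have hf' : HasDerivWithinAt f d (Iio r) √(r ^ 2) := by rwa [Real.sqrt_sq hr.le]
  rw [div_eq_mul_one_div]
  exact hf'.comp (r ^ 2) hsqrt.hasDerivWithinAt hmaps

lemma ConvexOn.le_add_mul_of_hasDerivWithinAt_Iio {S : Set ℝ} {g : ℝ → ℝ} {x y t d : ℝ}
    (hg : ConvexOn ℝ S g) (hx : x ∈ S) (hy : y ∈ S) (hxy : x < y)
    (hd : HasDerivWithinAt g d (Iio y) y) (ht : t ∈ Icc x y) :
    g t ≤ g x + (t - x) * d := by
  rcases ht.1.eq_or_lt with rfl | htx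
  · simp
  have htS : t ∈ S := hg.1.ordConnected.out hx hy ht
  have hslope : slope g x t ≤ d :=
    (hg.slope_mono hx ⟨htS, htx.ne'⟩ ⟨hy, hxy.ne'⟩ ht.2).trans
      (hg.slope_le_of_hasDerivWithinAt_Iio hx hy hxy hd)
  rw [slope_def_field, div_le_iff₀ (sub_pos.mpr htx)] at hslope
  linarith

theorem upper_envelope_general (f : ℝ → ℝ) (η : ℝ)
    (heven : ∀ x, f (-x) = f x) (h0 : f 0 = 1)
    (hmono : AntitoneOn f (Set.Ici 0))
    (hconv : ConvexOn ℝ (Set.Ici 0) (fun s => f (Real.sqrt s)))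
    (d : ℝ) (hd : HasDerivWithinAt f d (Set.Iio ((1 : ℝ) / 2)) ((1 : ℝ) / 2))
    (hdη : d ≤ -η) :
    ∀ x : ℝ, f x ≤ max (1 - η * x ^ 2) (1 - η / 4) := by
  have tangent_bound : ∀ t ∈ Icc 0 ((1 / 2 : ℝ) ^ 2), f √t ≤ 1 - η * t := fun t ht => by
    have := hconv.le_add_mul_of_hasDerivWithinAt_Iio self_mem_Ici (mem_Ici.mpr (by positivity))
      (by positivity) (hd.comp_sqrt_Iio (by norm_num)) ht
    norm_num [h0] at this
    linarith [mul_le_mul_of_nonneg_left hdη ht.1]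
  intro x
  have hfx : f x = f √(x ^ 2) := by
    rw [Real.sqrt_sq_eq_abs]
    rcases abs_choice x with h | h <;> simp [h, heven]
  rcases le_or_gt |x| (1 / 2) with hx | hx
  · refine le_max_of_le_left (hfx ▸ tangent_bound _ ⟨sq_nonneg x, ?_⟩)
    exact sq_le_sq' (abs_le.mp hx).1 (abs_le.mp hx).2
  · refine le_max_of_le_right ?_
    have hhalf := tangent_bound ((1 / 2) ^ 2) ⟨by positivity, le_rfl⟩
    rw [Real.sqrt_sq (by norm_num)] at hhalf
    calc f x = f |x| := by rw [hfx, Real.sqrt_sq_eq_abs]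
      _ ≤ f (1 / 2) := hmono (by norm_num) (abs_nonneg x) hx.le
      _ ≤ 1 - η / 4 := by linarith

theorem upper_envelope (f : ℝ → ℝ) (η : ℝ) (hη : 0 < η) (hη1 : η < 1)
    (heven : ∀ x, f (-x) = f x) (h0 : f 0 = 1)
    (hbound : ∀ x, max (1 - x ^ 2) 0 ≤ f x ∧ f x ≤ 1)
    (hmono : AntitoneOn f (Set.Ici 0))
    (hconv : ConvexOn ℝ (Set.Ici 0) (fun s => f (Real.sqrt s)))
    (d : ℝ) (hd : HasDerivWithinAt f d (Set.Iio ((1 : ℝ) / 2)) ((1 : ℝ) / 2))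
    (hdη : d ≤ -η) :
    ∀ x : ℝ, f x ≤ max (1 - η * x ^ 2) (1 - η / 4) :=
  upper_envelope_general f η heven h0 hmono hconv d hd hdη
end

section
/- For f_m(x) = (1-x²)₊ and for every x ≥ 1, one has (1/π)∫₀^∞ f_m(y) · (y/x) ln|(x+y)/(x-y)| dy ≥ (4/(15π)) x^{-2}. -/
/-!
Since `artanh u ≥ u` on `[0, 1)`, the kernel satisfies `(y/x) log((x+y)/(x-y)) ≥ 2 (y/x)²`
for `0 ≤ y < x`. For `x ≥ 1` this holds on the whole support `[0, 1]` of `f_m`, so the integral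
is at least `(2/x²) ∫₀¹ (1 - y²) y² dy = 4 / (15 x²)`.
-/

open MeasureTheory Set Real

noncomputable section

def fm (y : ℝ) : ℝ := max (1 - y ^ 2) 0

def logKernel (x y : ℝ) : ℝ := y / x * log |(x + y) / (x - y)|

lemma fm_nonneg (y : ℝ) : 0 ≤ fm y := le_max_right _ _

lemma fm_eq_zero_of_one_le {y : ℝ} (hy : 1 ≤ y) : fm y = 0 :=
  max_eq_right (by nlinarith)

lemma fm_eq_of_le_one {y : ℝ} (hy₀ : 0 ≤ y) (hy₁ : y ≤ 1) : fm y = 1 - y ^ 2 :=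
  max_eq_left (by nlinarith)

lemma setIntegral_Ioi_fm_mul (g : ℝ → ℝ) :
    ∫ y in Ioi 0, fm y * g y = ∫ y in Ioc 0 1, fm y * g y :=
  setIntegral_eq_of_subset_of_forall_sdiff_eq_zero measurableSet_Ioi Ioc_subset_Ioi_self
    fun y ⟨hy₀, hy⟩ => by
      rw [fm_eq_zero_of_one_le (le_of_not_ge fun h => hy ⟨hy₀, h⟩), zero_mul]

section logKernel

variable {x y : ℝ}

lemma abs_div_eq_one_add_div_one_sub (hy : 0 ≤ y) (hyx : y < x) :
    |(x + y) / (x - y)| = (1 + y / x) / (1 - y / x) := by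
  have hx : 0 < x := hy.trans_lt hyx
  rw [abs_of_pos (div_pos (by linarith) (by linarith))]
  field_simp

lemma two_mul_div_sq_le_logKernel (hy : 0 ≤ y) (hyx : y < x) :
    2 * (y / x) ^ 2 ≤ logKernel x y := by
  have hx : 0 < x := hy.trans_lt hyx
  have hu₀ : 0 ≤ y / x := div_nonneg hy hx.le
  have hartanh := Real.sum_range_le_log_div hu₀ ((div_lt_one hx).2 hyx) 1
  simp only [Finset.range_one, Finset.sum_singleton] at hartanh
  rw [logKernel, abs_div_eq_one_add_div_one_sub hy hyx]
  nlinarith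

lemma logKernel_le (hy : 0 ≤ y) (hyx : y < x) :
    logKernel x y ≤ 2 * y ^ 2 / (x * (x - y)) := by
  have hx : 0 < x := hy.trans_lt hyx
  have hxy : 0 < x - y := sub_pos.2 hyx
  have hq : 0 < (x + y) / (x - y) := div_pos (by linarith) hxy
  calc logKernel x y ≤ y / x * ((x + y) / (x - y) - 1) := by
        rw [logKernel, abs_of_pos hq]
        gcongr
        exact log_le_sub_one_of_pos hq
    _ = 2 * y ^ 2 / (x * (x - y)) := by field_simp; ring

end logKernel

section fmKernel

variable {x : ℝ}

lemma fm_mul_two_mul_div_sq_le (hx : 1 ≤ x) {y : ℝ} (hy : 0 ≤ y) :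
    fm y * (2 * (y / x) ^ 2) ≤ fm y * logKernel x y := by
  rcases lt_or_ge y 1 with hy₁ | hy₁
  · exact mul_le_mul_of_nonneg_left (two_mul_div_sq_le_logKernel hy (hy₁.trans_le hx))
      (fm_nonneg y)
  · simp [fm_eq_zero_of_one_le hy₁]

lemma norm_fm_mul_logKernel_le (hx : 1 ≤ x) {y : ℝ} (hy : 0 ≤ y) :
    ‖fm y * logKernel x y‖ ≤ 4 := by
  rcases lt_or_ge y 1 with hy₁ | hy₁
  · have hyx : y < x := hy₁.trans_le hx
    have hK₀ : 0 ≤ logKernel x y := (two_mul_div_sq_le_logKernel hy hyx).trans' (by positivity)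
    have hxy : 0 < x - y := sub_pos.2 hyx
    rw [fm_eq_of_le_one hy hy₁.le, Real.norm_of_nonneg (mul_nonneg (by nlinarith) hK₀)]
    calc (1 - y ^ 2) * logKernel x y ≤ (1 - y ^ 2) * (2 * y ^ 2 / (x * (x - y))) :=
          mul_le_mul_of_nonneg_left (logKernel_le hy hyx) (by nlinarith)
      _ ≤ 4 := by
          rw [mul_div_assoc', div_le_iff₀ (by positivity)]
          -- `1 - y² = (1 - y)(1 + y) ≤ (x - y) · 2` and `y² ≤ 1 ≤ x`
          nlinarith [mul_le_mul (by linarith : 1 - y ≤ x - y) (by linarith : 1 + y ≤ 2)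
            (by linarith) hxy.le, mul_le_mul hy₁.le hy₁.le hy zero_le_one]
  · simp [fm_eq_zero_of_one_le hy₁]

lemma integrableOn_fm_mul_logKernel (hx : 1 ≤ x) :
    IntegrableOn (fun y => fm y * logKernel x y) (Ioc 0 1) :=
  Measure.integrableOn_of_bounded measure_Ioc_lt_top.ne
    (by unfold fm logKernel; fun_prop)
    ((ae_restrict_iff' measurableSet_Ioc).2 <| .of_forall fun y hy =>
      norm_fm_mul_logKernel_le hx hy.1.le)

lemma setIntegral_Ioc_fm_mul_two_mul_div_sq :
    ∫ y in Ioc 0 1, fm y * (2 * (y / x) ^ 2) = 4 / 15 / x ^ 2 := by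
  have hpoly : ∀ y ∈ Ioc (0 : ℝ) 1,
      fm y * (2 * (y / x) ^ 2) = (2 * y ^ 2 - 2 * y ^ 4) / x ^ 2 :=
    fun y hy => by rw [fm_eq_of_le_one hy.1.le hy.2]; ring
  rw [setIntegral_congr_fun measurableSet_Ioc hpoly,
    ← intervalIntegral.integral_of_le zero_le_one, intervalIntegral.integral_div,
    intervalIntegral.integral_sub (Continuous.intervalIntegrable (by fun_prop) _ _)
      (Continuous.intervalIntegrable (by fun_prop) _ _)]
  simp only [intervalIntegral.integral_const_mul, integral_pow]
  norm_num

end fmKernel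

end

theorem fm_T_lower_bound (x : ℝ) (hx : 1 ≤ x) :
    (1 / Real.pi) * (∫ y in Set.Ioi (0 : ℝ),
        max (1 - y ^ 2) 0 * ((y / x) * Real.log (|(x + y) / (x - y)|))) ≥
      (4 / (15 * Real.pi)) / x ^ 2 := by
  change 4 / (15 * π) / x ^ 2 ≤ 1 / π * ∫ y in Ioi 0, fm y * logKernel x y
  have hcomp : 4 / 15 / x ^ 2 ≤ ∫ y in Ioc 0 1, fm y * logKernel x y := by
    rw [← setIntegral_Ioc_fm_mul_two_mul_div_sq]
    exact setIntegral_mono_on (Continuous.integrableOn_Ioc (by unfold fm; fun_prop))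
      (integrableOn_fm_mul_logKernel hx) measurableSet_Ioc
      fun y hy => fm_mul_two_mul_div_sq_le hx hy.1.le
  rw [setIntegral_Ioi_fm_mul]
  calc 4 / (15 * π) / x ^ 2 = 1 / π * (4 / 15 / x ^ 2) := by field_simp
    _ ≤ 1 / π * ∫ y in Ioc 0 1, fm y * logKernel x y := by gcongr
end

section
/- Let f : ℝ → ℝ be even, non-increasing and nonnegative on [0,∞), with s ↦ f(√s) convex, (1-x²)₊ ≤ f ≤ 1, and suppose b₂(f) := (2/π)∫₀^∞ y² f(y) dy < ∞ and b(f) := (2/π)∫₀^∞ f(y) dy < ∞. Then for all x > 0: (1/π)∫₀^∞ f(y) (y/x) ln|(x+y)/(x-y)| dy ≤ 3 b₂(f)/x². -/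
/-!
Write `y/x · ln|(x+y)/(x-y)| = k(y/x) + 6 y²/x²` with `k t = t ln|(1+t)/(1-t)| - 6t²`
(`LogKernel.kernel`); it suffices that `∫₀^∞ f(y) k(y/x) dy ≤ 0`. By the layer-cake formula
`f(y) = ∫₀^∞ 1{s < f(y)} ds` and Fubini, this integral is `∫₀^∞ (∫_{f > s} k(y/x) dy) ds`, and
since `f` is non-increasing and integrable, each superlevel set `{y > 0 | s < f y}` is an interval
`(0, z)` up to a null set. So it is enough that `∫₀^z k(y/x) dy = x P(z/x) ≤ 0` for the primitive
`P t = (t²-1)/2 · ln|(1+t)/(1-t)| + t - 2t³` of `k` (`LogKernel.primitive`). Since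
`P t = t (F t - 2t²)` for the function `F` of the paper, this is the bound `F t ≤ 2t²`, which
follows from `2u ≤ ln((1+u)/(1-u)) ≤ 2u/(1-u²)` for `0 ≤ u < 1` (compare the power series
termwise), applied to `u = t` and to `u = 1/t`.
-/

open MeasureTheory Set Real

namespace LogKernel

theorem two_mul_le_log_sub_log {u : ℝ} (h₀ : 0 ≤ u) (h₁ : u < 1) :
    2 * u ≤ log (1 + u) - log (1 - u) := by
  have hs := hasSum_log_sub_log_of_abs_lt_one (abs_lt.2 ⟨by linarith, h₁⟩)
  simpa using le_hasSum hs 0 fun k _ => by positivity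

theorem log_sub_log_le {u : ℝ} (h₀ : 0 ≤ u) (h₁ : u < 1) :
    log (1 + u) - log (1 - u) ≤ 2 * u / (1 - u ^ 2) := by
  have hgeom : HasSum (fun k : ℕ => 2 * u * (u ^ 2) ^ k) (2 * u / (1 - u ^ 2)) := by
    simpa [div_eq_mul_inv] using
      (hasSum_geometric_of_lt_one (by positivity) (by nlinarith : u ^ 2 < 1)).mul_left (2 * u)
  refine hasSum_le (fun k => ?_)
    (hasSum_log_sub_log_of_abs_lt_one (abs_lt.2 ⟨by linarith, h₁⟩)) hgeom
  calc 2 * (1 / (2 * (k : ℝ) + 1)) * u ^ (2 * k + 1) ≤ 2 * 1 * u ^ (2 * k + 1) := by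
        gcongr
        exact div_le_one_of_le₀ (by linarith [k.cast_nonneg (α := ℝ)]) (by positivity)
    _ = 2 * u * (u ^ 2) ^ k := by ring

noncomputable def logRatio (t : ℝ) : ℝ := log |(1 + t) / (1 - t)|

theorem logRatio_div {x : ℝ} (hx : x ≠ 0) (y : ℝ) :
    logRatio (y / x) = log |(x + y) / (x - y)| := by
  rw [logRatio, one_add_div hx, one_sub_div hx, div_div_div_cancel_right₀ hx]

theorem logRatio_inv (t : ℝ) : logRatio t⁻¹ = logRatio t := by
  rcases eq_or_ne t 0 with rfl | ht
  · simp
  rw [← one_div, logRatio_div ht, logRatio, abs_div, abs_div, abs_sub_comm, add_comm]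

theorem logRatio_eq {t : ℝ} (h₁ : t ≠ 1) (h₂ : t ≠ -1) :
    logRatio t = log (1 + t) - log (1 - t) := by
  rw [logRatio, log_abs, log_div] <;> intro h <;> [exact h₂ (by linarith); exact h₁ (by linarith)]

theorem logRatio_bounds {u : ℝ} (h₀ : 0 ≤ u) (h₁ : u < 1) :
    2 * u ≤ logRatio u ∧ logRatio u ≤ 2 * u / (1 - u ^ 2) := by
  rw [logRatio_eq h₁.ne (by linarith)]
  exact ⟨two_mul_le_log_sub_log h₀ h₁, log_sub_log_le h₀ h₁⟩

theorem logRatio_bounds_of_one_lt {t : ℝ} (ht : 1 < t) :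
    2 / t ≤ logRatio t ∧ logRatio t ≤ 2 * t / (t ^ 2 - 1) := by
  have h₀ : 0 < t := by linarith
  obtain ⟨hlow, hupp⟩ := logRatio_bounds (inv_nonneg.2 h₀.le) (inv_lt_one_of_one_lt₀ ht)
  rw [logRatio_inv] at hlow hupp
  refine ⟨by simpa [div_eq_mul_inv] using hlow, hupp.trans_eq ?_⟩
  have : t ^ 2 - 1 ≠ 0 := by nlinarith
  field_simp

noncomputable def kernel (t : ℝ) : ℝ := t * logRatio t - 6 * t ^ 2

theorem measurable_kernel : Measurable kernel := by
  unfold kernel logRatio; fun_prop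

noncomputable def primitive (t : ℝ) : ℝ := (t ^ 2 - 1) / 2 * logRatio t + t - 2 * t ^ 3

theorem primitive_nonpos {t : ℝ} (ht : 0 ≤ t) : primitive t ≤ 0 := by
  rcases lt_trichotomy t 1 with h | rfl | h
  · have : (t ^ 2 - 1) / 2 * logRatio t ≤ (t ^ 2 - 1) / 2 * (2 * t) :=
      mul_le_mul_of_nonpos_left (logRatio_bounds ht h).1 (by nlinarith)
    rw [primitive]; nlinarith [pow_nonneg ht 3]
  · norm_num [primitive]
  · have hne : t ^ 2 - 1 ≠ 0 := by nlinarith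
    have : (t ^ 2 - 1) / 2 * logRatio t ≤ (t ^ 2 - 1) / 2 * (2 * t / (t ^ 2 - 1)) :=
      mul_le_mul_of_nonneg_left (logRatio_bounds_of_one_lt h).2 (by nlinarith)
    rw [show (t ^ 2 - 1) / 2 * (2 * t / (t ^ 2 - 1)) = t by field_simp] at this
    rw [primitive]; nlinarith

theorem abs_kernel_le {t : ℝ} (ht : 2 ≤ t) : |kernel t| ≤ 3 + 6 * t ^ 2 := by
  obtain ⟨hlow, hupp⟩ := logRatio_bounds_of_one_lt (by linarith : 1 < t)
  have h₀ : 0 ≤ t * logRatio t :=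
    mul_nonneg (by linarith) ((div_nonneg (by norm_num) (by linarith)).trans hlow)
  have h₃ : t * logRatio t ≤ 3 := by
    calc t * logRatio t ≤ t * (2 * t / (t ^ 2 - 1)) :=
          mul_le_mul_of_nonneg_left hupp (by linarith)
      _ ≤ 3 := by rw [← mul_div_assoc, div_le_iff₀ (by nlinarith)]; nlinarith
  rw [kernel, abs_le]; constructor <;> nlinarith

theorem hasDerivAt_logRatio {t : ℝ} (h₁ : t ≠ 1) (h₂ : t ≠ -1) :
    HasDerivAt logRatio (2 / (1 - t ^ 2)) t := by
  have hp : 1 + t ≠ 0 := fun h => h₂ (by linarith)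
  have hm : 1 - t ≠ 0 := fun h => h₁ (by linarith)
  have h : 1 - t ^ 2 ≠ 0 := by
    rw [show 1 - t ^ 2 = (1 + t) * (1 - t) by ring]; exact mul_ne_zero hp hm
  have hd : HasDerivAt (fun t => (1 + t) / (1 - t)) (2 / (1 - t) ^ 2) t := by
    refine (((hasDerivAt_id t).const_add 1).div ((hasDerivAt_id t).const_sub 1) hm).congr_deriv ?_
    simp only [id_eq]; ring
  rw [show logRatio = fun t => log ((1 + t) / (1 - t)) from funext fun t => log_abs _]
  refine (hd.log (div_ne_zero hp hm)).congr_deriv ?_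
  field_simp
  ring

theorem hasDerivAt_primitive {t : ℝ} (h₁ : t ≠ 1) (h₂ : t ≠ -1) :
    HasDerivAt primitive (kernel t) t := by
  have h : 1 - t ^ 2 ≠ 0 := fun h => by
    rcases sq_eq_one_iff.1 (by linarith : t ^ 2 = 1) with h' | h' <;> contradiction
  refine ((((((hasDerivAt_pow 2 t).sub_const 1).div_const 2).mul
    (hasDerivAt_logRatio h₁ h₂)).add (hasDerivAt_id t)).sub
    ((hasDerivAt_pow 3 t).const_mul 2)).congr_deriv ?_
  rw [kernel]; field_simp; ring

theorem continuousOn_primitive : ContinuousOn primitive (Ioi (-1)) := by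
  -- near `t = 1` the factor `t - 1` tames the logarithm through `u ↦ u log u`
  have heq : EqOn (fun t => (t ^ 2 - 1) / 2 * log (1 + t) + (1 + t) / 2 * ((1 - t) * log (1 - t))
      + t - 2 * t ^ 3) primitive (Ioi (-1)) := fun t ht => by
    rcases eq_or_ne t 1 with rfl | h₁
    · norm_num [primitive]
    rw [primitive, logRatio_eq h₁ (ne_of_gt ht)]
    ring
  refine ContinuousOn.congr ?_ heq.symm
  have hlog : ContinuousOn (fun t : ℝ => log (1 + t)) (Ioi (-1)) :=
    ContinuousOn.log (by fun_prop) fun t ht => by simp only [mem_Ioi] at ht; linarith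
  have hmul : Continuous fun t : ℝ => (1 - t) * log (1 - t) :=
    continuous_mul_log.comp (by fun_prop)
  fun_prop

theorem intervalIntegrable_kernel (a b : ℝ) : IntervalIntegrable kernel volume a b := by
  have hp : IntervalIntegrable (fun t => log (1 + t)) volume a b := by
    simpa [add_comm] using
      (intervalIntegral.intervalIntegrable_log' (a := a + 1) (b := b + 1)).comp_add_right 1
  have hm : IntervalIntegrable (fun t => log (1 - t)) volume a b := by
    simpa using
      (intervalIntegral.intervalIntegrable_log' (a := 1 - a) (b := 1 - b)).comp_sub_left 1
  refine ((((hp.sub hm).continuousOn_mul continuousOn_id).sub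
    ((by fun_prop : Continuous fun t : ℝ => 6 * t ^ 2).intervalIntegrable a b))).congr_ae ?_
  have hfin : ({1, -1} : Set ℝ).Countable := (toFinite _).countable
  filter_upwards [ae_restrict_of_ae (hfin.ae_notMem volume)] with t ht
  simp only [mem_insert_iff, mem_singleton_iff, not_or] at ht
  simp [kernel, logRatio_eq ht.1 ht.2]

theorem integral_kernel {z : ℝ} (hz : 0 ≤ z) : ∫ t in 0..z, kernel t = primitive z := by
  rw [integral_eq_of_hasDerivAt_off_countable_of_le primitive kernel hz (countable_singleton 1)
    (continuousOn_primitive.mono fun t ht => by simp only [mem_Ioi]; linarith [ht.1])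
    (fun t ht => hasDerivAt_primitive ht.2 (by linarith [ht.1.1]))
    (intervalIntegrable_kernel 0 z)]
  norm_num [primitive, logRatio]

theorem setIntegral_kernel_div_nonpos {x z : ℝ} (hx : 0 < x) (hz : 0 ≤ z) :
    ∫ y in Ioc 0 z, kernel (y / x) ≤ 0 := by
  rw [← intervalIntegral.integral_of_le hz, intervalIntegral.integral_comp_div _ hx.ne', zero_div,
    integral_kernel (div_nonneg hz hx.le), smul_eq_mul]
  exact mul_nonpos_of_nonneg_of_nonpos hx.le (primitive_nonpos (div_nonneg hz hx.le))

end LogKernel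

section LayerCake

theorem volume_restrict_Ioi_zero_Iio (a : ℝ) :
    volume.restrict (Ioi 0) (Iio a) = ENNReal.ofReal a := by
  rw [Measure.restrict_apply measurableSet_Iio, Iio_inter_Ioi, Real.volume_Ioo, sub_zero]

theorem setIntegral_Ioi_indicator_Iio {a : ℝ} (ha : 0 ≤ a) (c : ℝ) :
    ∫ s in Ioi 0, (Iio a).indicator (fun _ => c) s = a * c := by
  rw [integral_indicator_const c measurableSet_Iio, measureReal_def,
    volume_restrict_Ioi_zero_Iio, ENNReal.toReal_ofReal ha, smul_eq_mul]

theorem integrableOn_Ioi_indicator_Iio (a c : ℝ) :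
    IntegrableOn ((Iio a).indicator fun _ => c) (Ioi 0) := by
  rw [IntegrableOn, integrable_indicator_iff measurableSet_Iio, integrableOn_const_iff,
    volume_restrict_Ioi_zero_Iio]
  exact Or.inr ENNReal.ofReal_lt_top

variable {α : Type*} [MeasurableSpace α] {μ : Measure α} [SFinite μ]

theorem integral_mul_eq_integral_setIntegral_superlevel {g φ : α → ℝ} (hg : Measurable g)
    (hg₀ : ∀ y, 0 ≤ g y) (hφ : AEStronglyMeasurable φ μ)
    (hgφ : Integrable (fun y => g y * φ y) μ) :
    ∫ y, g y * φ y ∂μ = ∫ s in Ioi 0, ∫ y in {y | s < g y}, φ y ∂μ := by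
  set F : ℝ → α → ℝ := fun s y => (Iio (g y)).indicator (fun _ => φ y) s
  have hF : Function.uncurry F = {p : ℝ × α | p.1 < g p.2}.indicator fun p => φ p.2 := rfl
  have hF_meas :
      AEStronglyMeasurable (Function.uncurry F) ((volume.restrict (Ioi 0)).prod μ) := by
    rw [hF]
    exact hφ.comp_snd.indicator (measurableSet_lt measurable_fst (hg.comp measurable_snd))
  have hF_int : Integrable (Function.uncurry F) ((volume.restrict (Ioi 0)).prod μ) := by
    refine (integrable_prod_iff' hF_meas).2
      ⟨ae_of_all _ fun y => integrableOn_Ioi_indicator_Iio (g y) (φ y), ?_⟩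
    refine hgφ.norm.congr (ae_of_all _ fun y => ?_)
    simp only [Function.uncurry_apply_pair, F, norm_indicator_eq_indicator_norm]
    rw [setIntegral_Ioi_indicator_Iio (hg₀ y), norm_mul, Real.norm_of_nonneg (hg₀ y)]
  calc ∫ y, g y * φ y ∂μ = ∫ y, (∫ s in Ioi (0 : ℝ), F s y) ∂μ := by
        congr 1 with y; exact (setIntegral_Ioi_indicator_Iio (hg₀ y) _).symm
    _ = ∫ s in Ioi 0, ∫ y, F s y ∂μ := (integral_integral_swap hF_int).symm
    _ = ∫ s in Ioi 0, ∫ y in {y | s < g y}, φ y ∂μ := by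
        congr 1 with s
        exact integral_indicator (measurableSet_lt measurable_const hg)

end LayerCake

section Antitone

variable {f : ℝ → ℝ}

theorem bddAbove_superlevel_inter_Ioi (hf : AntitoneOn f (Ioi 0)) (hfi : IntegrableOn f (Ioi 0))
    {s : ℝ} (hs : 0 < s) : BddAbove ({y | s < f y} ∩ Ioi 0) := by
  by_contra h
  have hle : ∀ y ∈ Ioi (0 : ℝ), s ≤ f y := fun y hy => by
    obtain ⟨a, ⟨has, ha⟩, hya⟩ := not_bddAbove_iff.1 h y
    exact has.le.trans (hf hy ha hya.le)
  have hsi : IntegrableOn (fun _ => s) (Ioi (0 : ℝ)) :=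
    hfi.mono' aestronglyMeasurable_const <| (ae_restrict_mem measurableSet_Ioi).mono
      fun y hy => (Real.norm_of_nonneg hs.le).trans_le (hle y hy)
  rw [integrableOn_const_iff, Real.volume_Ioi] at hsi
  simp [hs.ne'] at hsi

theorem exists_superlevel_inter_Ioi_ae_eq_Ioc (hf : AntitoneOn f (Ioi 0))
    (hfi : IntegrableOn f (Ioi 0)) {s : ℝ} (hs : 0 < s) :
    ∃ z, 0 ≤ z ∧ ({y | s < f y} ∩ Ioi 0 : Set ℝ) =ᵐ[volume] Ioc 0 z := by
  set S := {y | s < f y} ∩ Ioi 0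
  have hbdd := bddAbove_superlevel_inter_Ioi hf hfi hs
  refine ⟨sSup S, Real.sSup_nonneg fun y hy => hy.2.le, ?_⟩
  have hS_sub : S ⊆ Ioc 0 (sSup S) := fun y hy => ⟨hy.2, le_csSup hbdd hy⟩
  have hIoo_sub : Ioo 0 (sSup S) ⊆ S := by
    rintro y ⟨hy₀, hy⟩
    rcases S.eq_empty_or_nonempty with hS | hS
    · rw [hS, Real.sSup_empty] at hy; linarith
    obtain ⟨a, ⟨has, ha⟩, hya⟩ := exists_lt_of_lt_csSup hS hy
    exact ⟨has.trans_le (hf hy₀ ha hya.le), hy₀⟩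
  exact hS_sub.eventuallyLE.antisymm (Ioo_ae_eq_Ioc.symm.le.trans hIoo_sub.eventuallyLE)

theorem setIntegral_mul_nonpos_of_antitoneOn {φ : ℝ → ℝ} (hf : AntitoneOn f (Ici 0))
    (hf₀ : ∀ y, 0 ≤ f y) (hfi : IntegrableOn f (Ioi 0))
    (hφ : AEStronglyMeasurable φ (volume.restrict (Ioi 0)))
    (hfφ : IntegrableOn (fun y => f y * φ y) (Ioi 0))
    (hφ_nonpos : ∀ z, 0 ≤ z → ∫ y in Ioc 0 z, φ y ≤ 0) :
    ∫ y in Ioi 0, f y * φ y ≤ 0 := by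
  -- `g` is antitone on all of `ℝ`, hence measurable, and agrees with `f` on `Ioi 0`.
  set g : ℝ → ℝ := fun y => f (max y 0)
  have hg : Antitone g := fun a b hab =>
    hf (le_max_right a 0) (le_max_right b 0) (max_le_max_right 0 hab)
  have hfg : EqOn f g (Ioi 0) := fun y hy => by simp [g, max_eq_left (mem_Ioi.1 hy).le]
  have hfgφ : EqOn (fun y => f y * φ y) (fun y => g y * φ y) (Ioi 0) := fun y hy => by
    simp only [hfg hy]
  rw [setIntegral_congr_fun measurableSet_Ioi hfgφ,
    integral_mul_eq_integral_setIntegral_superlevel hg.measurable (fun y => hf₀ _) hφ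
      (hfφ.congr_fun hfgφ measurableSet_Ioi)]
  refine setIntegral_nonpos measurableSet_Ioi fun s hs => ?_
  obtain ⟨z, hz, hS⟩ := exists_superlevel_inter_Ioi_ae_eq_Ioc (hg.antitoneOn _)
    (hfi.congr_fun hfg measurableSet_Ioi) hs
  rw [Measure.restrict_restrict (measurableSet_lt measurable_const hg.measurable),
    setIntegral_congr_set hS]
  exact hφ_nonpos z hz

open LogKernel in
theorem integrableOn_mul_kernel_div (hf : AntitoneOn f (Ici 0)) (hf₀ : ∀ y, 0 ≤ f y)
    (hfi : IntegrableOn f (Ioi 0)) (hf₂ : IntegrableOn (fun y => y ^ 2 * f y) (Ioi 0))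
    {x : ℝ} (hx : 0 < x) : IntegrableOn (fun y => f y * kernel (y / x)) (Ioi 0) := by
  rw [← Ioc_union_Ioi_eq_Ioi (by positivity : (0 : ℝ) ≤ 2 * x)]
  refine IntegrableOn.union ?_ ?_
  · have hki : IntegrableOn (fun y => kernel (y / x)) (Ioc 0 (2 * x)) := by
      have := (intervalIntegrable_kernel 0 2).comp_mul_right (c := x⁻¹)
      rw [zero_div, div_inv_eq_mul, intervalIntegrable_iff_integrableOn_Ioc_of_le (by positivity)]
        at this
      simpa only [← div_eq_mul_inv] using this
    refine hki.bdd_mul (c := f 0) (hfi.mono_set Ioc_subset_Ioi_self).aestronglyMeasurable ?_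
    filter_upwards [ae_restrict_mem measurableSet_Ioc] with y hy
    rw [Real.norm_of_nonneg (hf₀ y)]
    exact hf self_mem_Ici hy.1.le hy.1.le
  · refine Integrable.mono' (IntegrableOn.mono_set ((hfi.const_mul 3).add
      (hf₂.const_mul (6 / x ^ 2))) (Ioi_subset_Ioi (by positivity)))
      ((hfi.mono_set (Ioi_subset_Ioi (by positivity))).aestronglyMeasurable.mul
        (measurable_kernel.comp (measurable_id.div_const x)).aestronglyMeasurable) ?_
    filter_upwards [ae_restrict_mem measurableSet_Ioi] with y hy
    have h2 : 2 ≤ y / x := by rw [le_div_iff₀ hx]; linarith [mem_Ioi.1 hy]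
    rw [norm_mul, Real.norm_of_nonneg (hf₀ y), Real.norm_eq_abs]
    calc f y * |kernel (y / x)| ≤ f y * (3 + 6 * (y / x) ^ 2) :=
          mul_le_mul_of_nonneg_left (abs_kernel_le h2) (hf₀ y)
      _ = 3 * f y + 6 / x ^ 2 * (y ^ 2 * f y) := by field_simp

end Antitone

open LogKernel in
theorem T_upper_bound_general (f : ℝ → ℝ)
    (hmono : AntitoneOn f (Set.Ici 0)) (hnonneg : ∀ x, 0 ≤ f x)
    (hb2 : IntegrableOn (fun y => y ^ 2 * f y) (Set.Ioi 0))
    (hb : IntegrableOn f (Set.Ioi 0)) :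
    ∀ x : ℝ, 0 < x →
      (1 / Real.pi) * (∫ y in Set.Ioi (0 : ℝ),
          f y * ((y / x) * Real.log (|(x + y) / (x - y)|))) ≤
        3 * ((2 / Real.pi) * ∫ y in Set.Ioi (0 : ℝ), y ^ 2 * f y) / x ^ 2 := by
  intro x hx
  have hk := integrableOn_mul_kernel_div hmono hnonneg hb hb2 hx
  have hk_nonpos : ∫ y in Ioi 0, f y * kernel (y / x) ≤ 0 :=
    setIntegral_mul_nonpos_of_antitoneOn hmono hnonneg hb
      (measurable_kernel.comp (measurable_id.div_const x)).aestronglyMeasurable hk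
      fun z hz => setIntegral_kernel_div_nonpos hx hz
  have hsplit : ∫ y in Ioi 0, f y * ((y / x) * log |(x + y) / (x - y)|) =
      (∫ y in Ioi 0, f y * kernel (y / x)) + 6 / x ^ 2 * ∫ y in Ioi 0, y ^ 2 * f y := by
    rw [← integral_const_mul, ← integral_add hk (hb2.const_mul (6 / x ^ 2))]
    congr 1 with y
    rw [kernel, logRatio_div hx.ne']
    field_simp
    ring
  rw [hsplit]
  calc 1 / π * ((∫ y in Ioi 0, f y * kernel (y / x)) + 6 / x ^ 2 * ∫ y in Ioi 0, y ^ 2 * f y)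
      ≤ 1 / π * (0 + 6 / x ^ 2 * ∫ y in Ioi 0, y ^ 2 * f y) := by gcongr
    _ = 3 * (2 / π * ∫ y in Ioi 0, y ^ 2 * f y) / x ^ 2 := by ring

theorem T_upper_bound (f : ℝ → ℝ) (heven : ∀ x, f (-x) = f x)
    (hmono : AntitoneOn f (Set.Ici 0)) (hnonneg : ∀ x, 0 ≤ f x)
    (hconv : ConvexOn ℝ (Set.Ici 0) (fun s => f (Real.sqrt s)))
    (hbound : ∀ x, max (1 - x ^ 2) 0 ≤ f x ∧ f x ≤ 1)
    (hb2 : IntegrableOn (fun y => y ^ 2 * f y) (Set.Ioi 0))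
    (hb : IntegrableOn f (Set.Ioi 0)) :
    ∀ x : ℝ, 0 < x →
      (1 / Real.pi) * (∫ y in Set.Ioi (0 : ℝ),
          f y * ((y / x) * Real.log (|(x + y) / (x - y)|))) ≤
        3 * ((2 / Real.pi) * ∫ y in Set.Ioi (0 : ℝ), y ^ 2 * f y) / x ^ 2 :=
  T_upper_bound_general f hmono hnonneg hb2 hb
end
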